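/- Under unconfoundedness and overlap, E[(D - (1-D)·π(X)/(1-π(X)))·Y] = P(D=1)·(E[Y(1)|D=1] - E[Y(0)|D=1]); i.e., the weighted contrast identifies the average treatment effect on the treated up to the factor P(D=1). -/

import Mathlib

/-!
Unconfoundedness makes `Y(0)` and `D` independent under almost every conditional law given
`X`, so `E[D·Y(0) | X] = π·E[Y(0) | X]` and `E[(1-D)·Y(0) | X] = (1-π)·E[Y(0) | X]`.
Reweighting the controls by the odds `π/(1-π)`, which is `X`-measurable, therefore turns
`E[(1-D)·Y(0)]` into `E[D·Y(0)]`. On `{D = 1}` the observed outcome is `Y(1)`, so the weighted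
contrast equals `E[D·Y(1)] - E[D·Y(0)] = P(D=1)·κ`.
-/

open MeasureTheory ProbabilityTheory MeasurableSpace

namespace ProbabilityTheory

variable {Ω β β' : Type*} {m mΩ : MeasurableSpace Ω} [StandardBorelSpace Ω] {hm : m ≤ mΩ}
  {μ : Measure Ω} [IsFiniteMeasure μ]

theorem CondIndepFun.ae_indepFun_condExpKernel {mβ : MeasurableSpace β}
    {mβ' : MeasurableSpace β'} [CountableOrCountablyGenerated Ω (β × β')]
    {f : Ω → β} {g : Ω → β'} (hf : Measurable f) (hg : Measurable g)
    (h : CondIndepFun m hm f g μ) :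
    ∀ᵐ ω ∂μ, IndepFun f g (condExpKernel μ m ω) := by
  rw [condIndepFun_iff_map_prod_eq_prod_map_map hf hg] at h
  filter_upwards [ae_of_ae_trim hm h] with ω hω
  rw [indepFun_iff_map_prod_eq_prod_map_map hf.aemeasurable hg.aemeasurable]
  simpa only [Kernel.map_apply _ (hf.prodMk hg), Kernel.prod_apply,
    Kernel.map_apply _ hf, Kernel.map_apply _ hg] using hω

theorem CondIndepFun.condExp_mul_ae_eq {f g : Ω → ℝ} (hf : Measurable f) (hg : Measurable g)
    (hfi : Integrable f μ) (hgi : Integrable g μ) (hfg : Integrable (f * g) μ)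
    (h : CondIndepFun m hm f g μ) :
    μ[f * g | m] =ᵐ[μ] μ[f | m] * μ[g | m] := by
  filter_upwards [h.ae_indepFun_condExpKernel hf hg,
    condExp_ae_eq_integral_condExpKernel hm hfg, condExp_ae_eq_integral_condExpKernel hm hfi,
    condExp_ae_eq_integral_condExpKernel hm hgi] with ω hindep hfg_eq hf_eq hg_eq
  rw [hfg_eq, Pi.mul_apply, hf_eq, hg_eq]
  exact hindep.integral_mul_eq_mul_integral hf.aestronglyMeasurable hg.aestronglyMeasurable

end ProbabilityTheory

theorem integral_odds_weight_mul_eq_integral_mul {Ω : Type*} {m mΩ : MeasurableSpace Ω}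
    (hm : m ≤ mΩ) {μ : Measure Ω} [SigmaFinite (μ.trim hm)] {D Y π : Ω → ℝ}
    (hY : Integrable Y μ) (hDY : Integrable (D * Y) μ)
    (hfactor : μ[D * Y | m] =ᵐ[μ] μ[D | m] * μ[Y | m])
    (hπ : π =ᵐ[μ] μ[D | m]) (hπ_ne : ∀ᵐ ω ∂μ, π ω ≠ 1)
    (hW : Integrable (fun ω => (1 - D ω) * π ω / (1 - π ω) * Y ω) μ) :
    ∫ ω, (1 - D ω) * π ω / (1 - π ω) * Y ω ∂μ = ∫ ω, D ω * Y ω ∂μ := by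
  set e := μ[D | m]
  set odds : Ω → ℝ := fun ω => e ω / (1 - e ω)
  have hodds : StronglyMeasurable[m] odds :=
    (stronglyMeasurable_condExp.measurable.div
      (measurable_const.sub stronglyMeasurable_condExp.measurable)).stronglyMeasurable
  have hW_eq : (fun ω => (1 - D ω) * π ω / (1 - π ω) * Y ω) =ᵐ[μ] odds * (Y - D * Y) := by
    filter_upwards [hπ] with ω hω
    simp only [Pi.mul_apply, Pi.sub_apply, odds, hω]
    ring
  have hcontrol : μ[Y - D * Y | m] =ᵐ[μ] (1 - e) * μ[Y | m] := by
    filter_upwards [condExp_sub hY hDY m, hfactor] with ω hsub hprod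
    simp only [hsub, Pi.sub_apply, hprod, Pi.mul_apply, Pi.one_apply]
    ring
  have hcancel : μ[odds * (Y - D * Y) | m] =ᵐ[μ] e * μ[Y | m] := by
    filter_upwards [condExp_mul_of_stronglyMeasurable_left hodds (hW.congr hW_eq)
      (hY.sub hDY), hcontrol, hπ, hπ_ne] with ω hmul hctl hπω hne
    have hne' : 1 - e ω ≠ 0 := sub_ne_zero.mpr (hπω ▸ hne).symm
    simp only [hmul, Pi.mul_apply, hctl, Pi.sub_apply, Pi.one_apply, odds]
    field_simp
  calc ∫ ω, (1 - D ω) * π ω / (1 - π ω) * Y ω ∂μ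
      = ∫ ω, μ[odds * (Y - D * Y) | m] ω ∂μ := by
        rw [integral_condExp hm]; exact integral_congr_ae hW_eq
    _ = ∫ ω, μ[D * Y | m] ω ∂μ := integral_congr_ae (hcancel.trans hfactor.symm)
    _ = ∫ ω, D ω * Y ω ∂μ := integral_condExp hm

theorem mul_eq_indicator_of_zero_or_one {Ω : Type*} {D : Ω → ℝ}
    (hD : ∀ ω, D ω = 0 ∨ D ω = 1) (Y : Ω → ℝ) :
    (fun ω => D ω * Y ω) = {ω | D ω = 1}.indicator Y := by
  ext ω
  rcases hD ω with h | h <;> simp [h]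

theorem measure_toReal_mul_integral_cond {Ω : Type*} [MeasurableSpace Ω] (μ : Measure Ω)
    [IsFiniteMeasure μ] (s : Set Ω) (f : Ω → ℝ) :
    (μ s).toReal * ∫ ω, f ω ∂μ[|s] = ∫ ω in s, f ω ∂μ := by
  rw [ProbabilityTheory.cond, integral_smul_measure, smul_eq_mul, ENNReal.toReal_inv, ← mul_assoc]
  by_cases hs : μ s = 0
  · simp [Measure.restrict_eq_zero.mpr hs]
  · rw [mul_inv_cancel₀ (ENNReal.toReal_ne_zero.mpr ⟨hs, measure_ne_top μ s⟩), one_mul]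

theorem ipw_identifies_att_general
    {Ω 𝒳 : Type*} [MeasurableSpace Ω] [StandardBorelSpace Ω] [MeasurableSpace 𝒳]
    (μ : Measure Ω) [IsProbabilityMeasure μ]
    (D : Ω → ℝ) (X : Ω → 𝒳) (Y0 Y1 : Ω → ℝ)
    (hD : Measurable D) (hX : Measurable X)
    (hY0 : Measurable Y0)
    (hDbin : ∀ ω, D ω = 0 ∨ D ω = 1)
    (hY0int : Integrable Y0 μ) (hY1int : Integrable Y1 μ)
    (π : Ω → ℝ) (hπ : π =ᵐ[μ] μ[D | MeasurableSpace.comap X inferInstance])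
    (hoverlap : ∀ᵐ ω ∂μ, 0 < π ω ∧ π ω < 1)
    (hunconf : CondIndepFun (MeasurableSpace.comap X inferInstance) hX.comap_le
      (fun ω => (Y0 ω, Y1 ω)) D μ)
    (hint : Integrable
      (fun ω => (D ω - (1 - D ω) * π ω / (1 - π ω))
        * (D ω * Y1 ω + (1 - D ω) * Y0 ω)) μ) :
    ∫ ω, (D ω - (1 - D ω) * π ω / (1 - π ω))
        * (D ω * Y1 ω + (1 - D ω) * Y0 ω) ∂μ
      = (μ {ω | D ω = 1}).toReal
        * (∫ ω, Y1 ω ∂μ[|{ω | D ω = 1}] - ∫ ω, Y0 ω ∂μ[|{ω | D ω = 1}]) := by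
  have hB : MeasurableSet {ω | D ω = 1} := hD (measurableSet_singleton 1)
  have hDY (Y : Ω → ℝ) (hY : Integrable Y μ) : Integrable (fun ω => D ω * Y ω) μ := by
    rw [mul_eq_indicator_of_zero_or_one hDbin]; exact hY.indicator hB
  have hDY_eq (Y : Ω → ℝ) : ∫ ω, D ω * Y ω ∂μ = ∫ ω in {ω | D ω = 1}, Y ω ∂μ := by
    rw [mul_eq_indicator_of_zero_or_one hDbin, integral_indicator hB]
  have hsplit : ∀ ω, (D ω - (1 - D ω) * π ω / (1 - π ω)) * (D ω * Y1 ω + (1 - D ω) * Y0 ω)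
      = D ω * Y1 ω - (1 - D ω) * π ω / (1 - π ω) * Y0 ω := by
    intro ω; rcases hDbin ω with h | h <;> rw [h] <;> ring
  have hW : Integrable (fun ω => (1 - D ω) * π ω / (1 - π ω) * Y0 ω) μ := by
    refine ((hDY Y1 hY1int).sub hint).congr (ae_of_all _ fun ω => ?_)
    simp only [Pi.sub_apply, hsplit]
    ring
  have hDint : Integrable D μ := by simpa using hDY 1 (integrable_const 1)
  have hfactor := (hunconf.comp measurable_fst measurable_id).symm.condExp_mul_ae_eq hD hY0
    hDint hY0int (hDY Y0 hY0int)
  have hcontrols := integral_odds_weight_mul_eq_integral_mul (D := D) hX.comap_le hY0int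
    (hDY Y0 hY0int) hfactor hπ (hoverlap.mono fun _ h => h.2.ne) hW
  rw [integral_congr_ae (ae_of_all _ hsplit), integral_sub (hDY Y1 hY1int) hW, hcontrols,
    hDY_eq, hDY_eq, mul_sub, measure_toReal_mul_integral_cond, measure_toReal_mul_integral_cond]

/-- The weighted contrast identifies the ATT up to the factor `P(D=1)`:
`E[(D - (1-D)·π(X)/(1-π(X)))·Y] = P(D=1)·(E[Y(1)|D=1] - E[Y(0)|D=1])`. -/
theorem ipw_identifies_att
    {Ω 𝒳 : Type*} [MeasurableSpace Ω] [StandardBorelSpace Ω] [MeasurableSpace 𝒳]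
    (μ : Measure Ω) [IsProbabilityMeasure μ]
    (D : Ω → ℝ) (X : Ω → 𝒳) (Y0 Y1 : Ω → ℝ)
    (hD : Measurable D) (hX : Measurable X)
    (hY0 : Measurable Y0) (hY1 : Measurable Y1)
    (hDbin : ∀ ω, D ω = 0 ∨ D ω = 1)
    (hpos : 0 < μ {ω | D ω = 1})
    (hY0int : Integrable Y0 μ) (hY1int : Integrable Y1 μ)
    (π : Ω → ℝ) (hπ : π =ᵐ[μ] μ[D | MeasurableSpace.comap X inferInstance])
    (hoverlap : ∀ᵐ ω ∂μ, 0 < π ω ∧ π ω < 1)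
    (hunconf : CondIndepFun (MeasurableSpace.comap X inferInstance) hX.comap_le
      (fun ω => (Y0 ω, Y1 ω)) D μ)
    (hint : Integrable
      (fun ω => (D ω - (1 - D ω) * π ω / (1 - π ω))
        * (D ω * Y1 ω + (1 - D ω) * Y0 ω)) μ) :
    ∫ ω, (D ω - (1 - D ω) * π ω / (1 - π ω))
        * (D ω * Y1 ω + (1 - D ω) * Y0 ω) ∂μ
      = (μ {ω | D ω = 1}).toReal
        * (∫ ω, Y1 ω ∂μ[|{ω | D ω = 1}] - ∫ ω, Y0 ω ∂μ[|{ω | D ω = 1}]) :=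
  ipw_identifies_att_general μ D X Y0 Y1 hD hX hY0 hDbin hY0int hY1int π hπ hoverlap hunconf hint
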